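/- arXiv:2008.07576 — 2 statements merged into one kernel-verified Lean document; each statement's English description precedes it below -/
import Mathlib

section
/- Let ε > 0. Suppose K : ℝ³ × ℝ³ → ℂ is measurable and there is a constant C such that |K(x,y)| ≤ C / (⟨x⟩ ⟨y⟩ ⟨|x| − |y|⟩^{2+ε}) for all x, y ∈ ℝ³. Then the integral operator (Kf)(x) = ∫_{ℝ³} K(x,y) f(y) dy is bounded on L^p(ℝ³) for every 1 ≤ p ≤ ∞; that is, there is a constant C′ such that for every f ∈ L^p(ℝ³) the integral converges for almost every x and ‖Kf‖_{L^p} ≤ C′ ‖f‖_{L^p}. -/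
/-
Schur's test. Since ⟨y⟩ ≤ 3⟨x⟩⟨|x| - |y|⟩, the hypothesis gives
|K(x,y)| ≲ ⟨y⟩⁻² ⟨|x| - |y|⟩^{-1-ε}; in polar coordinates the factor r²⟨r⟩⁻² ≤ 1 absorbs the
Jacobian, so ∫ |K(x,y)| dy ≲ ∫_ℝ ⟨|x| - r⟩^{-1-ε} dr, which is finite and independent of x.
The hypothesis is symmetric in x and y, so ∫ |K(x,y)| dx obeys the same bound A.
For p = ∞ the first bound suffices. For p < ∞, Hölder's inequality against the measure
|K(x,y)| dy gives |Kf(x)|^p ≤ A^{p-1} ∫ |K(x,y)| |f(y)|^p dy, and integrating in x with the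
second bound gives ‖Kf‖_p ≤ A ‖f‖_p.
-/

open MeasureTheory Real Set ENNReal

noncomputable section

abbrev E3 := EuclideanSpace ℝ (Fin 3)

/-- Japanese bracket on ℝ³. -/
def jap (x : E3) : ℝ := Real.sqrt (1 + ‖x‖ ^ 2)

/-- Japanese bracket on ℝ. -/
def japR (t : ℝ) : ℝ := Real.sqrt (1 + t ^ 2)

theorem lintegral_fun_norm_addHaar {E : Type*} [NormedAddCommGroup E] [NormedSpace ℝ E]
    [MeasurableSpace E] [BorelSpace E] [FiniteDimensional ℝ E] [Nontrivial E]
    (μ : Measure E) [μ.IsAddHaarMeasure] {f : ℝ → ℝ≥0∞} (hf : Measurable f) :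
    ∫⁻ x, f ‖x‖ ∂μ = Module.finrank ℝ E * μ (Metric.ball 0 1) *
      ∫⁻ r in Ioi (0 : ℝ), ENNReal.ofReal (r ^ (Module.finrank ℝ E - 1)) * f r := by
  have hf_snd : Measurable fun p : Metric.sphere (0 : E) 1 × Ioi (0 : ℝ) => f p.2 :=
    hf.comp (measurable_subtype_coe.comp measurable_snd)
  have hpolar := (μ.measurePreserving_homeomorphUnitSphereProd).lintegral_comp hf_snd
  simp only [homeomorphUnitSphereProd_apply_snd_coe] at hpolar
  have hcompl : ∫⁻ x, f ‖x‖ ∂μ = ∫⁻ x : ({0}ᶜ : Set E), f ‖(x : E)‖ ∂μ.comap (↑) := by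
    rw [lintegral_subtype_comap (measurableSet_singleton 0).compl (fun x => f ‖x‖),
      restrict_compl_singleton]
  rw [hcompl, hpolar, lintegral_prod _ hf_snd.aemeasurable]
  simp only [lintegral_const, Measure.toSphere_apply_univ, Measure.volumeIoiPow]
  rw [lintegral_withDensity_eq_lintegral_mul _ (measurable_subtype_coe.pow_const _).ennreal_ofReal
      (g := fun r : Ioi (0 : ℝ) => f r) (hf.comp measurable_subtype_coe), mul_comm]
  simp only [Pi.mul_apply]
  rw [lintegral_subtype_comap measurableSet_Ioi
    (fun r : ℝ => ENNReal.ofReal (r ^ (Module.finrank ℝ E - 1)) * f r)]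

section SchurTest

variable {α β : Type*} [MeasurableSpace α] [MeasurableSpace β] {μ : Measure α} {ν : Measure β}

lemma ae_lt_top_of_eLpNorm_ne_top {f : α → ℝ≥0∞} (hf : AEMeasurable f μ) {p : ℝ≥0∞}
    (hp : p ≠ 0) (hfp : eLpNorm f p μ ≠ ∞) : ∀ᵐ x ∂μ, f x < ∞ := by
  rcases eq_or_ne p ∞ with rfl | hp_top
  · rw [eLpNorm_exponent_top] at hfp
    filter_upwards [ae_le_eLpNormEssSup (f := f) (μ := μ)] with x hx
    exact hx.trans_lt hfp.lt_top
  · have hp_pos : 0 < p.toReal := ENNReal.toReal_pos hp hp_top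
    rw [eLpNorm_eq_lintegral_rpow_enorm_toReal hp hp_top] at hfp
    simp only [enorm_eq_self] at hfp
    have hint : ∫⁻ x, f x ^ p.toReal ∂μ ≠ ∞ := by
      intro h; simp [h, hp_pos] at hfp
    filter_upwards [ae_lt_top' (hf.pow_const _) hint] with x hx
    exact (ENNReal.rpow_lt_top_iff_of_pos hp_pos).mp hx

lemma lintegral_mul_le_rpow_mul_rpow {n G : β → ℝ≥0∞} (hn : AEMeasurable n ν)
    (hG : AEMeasurable G ν) {p : ℝ} (hp : 1 ≤ p) :
    ∫⁻ y, n y * G y ∂ν ≤ (∫⁻ y, n y ∂ν) ^ (1 - 1 / p) * (∫⁻ y, n y * G y ^ p ∂ν) ^ (1 / p) := by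
  have hp0 : 0 < p := zero_lt_one.trans_le hp
  have hexp : 0 ≤ 1 - 1 / p := by rw [sub_nonneg, div_le_one hp0]; exact hp
  refine le_of_eq_of_le (lintegral_congr fun y => ?_)
    (ENNReal.lintegral_mul_norm_pow_le hn (hn.mul (hG.pow_const p)) hexp (by positivity)
      (sub_add_cancel 1 (1 / p)))
  simp only [Pi.mul_apply]
  rw [ENNReal.mul_rpow_of_nonneg _ _ (by positivity), ← ENNReal.rpow_mul,
    mul_one_div_cancel hp0.ne', ENNReal.rpow_one, ← mul_assoc,
    ← ENNReal.rpow_add_of_nonneg _ _ hexp (by positivity), sub_add_cancel, ENNReal.rpow_one]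

variable [SFinite μ] [SFinite ν]

lemma lintegral_lintegral_mul_le {N : α → β → ℝ≥0∞} (hN : Measurable (Function.uncurry N))
    {A : ℝ≥0∞} (hcol : ∀ y, ∫⁻ x, N x y ∂μ ≤ A) {G : β → ℝ≥0∞} (hG : Measurable G) :
    ∫⁻ x, ∫⁻ y, N x y * G y ∂ν ∂μ ≤ A * ∫⁻ y, G y ∂ν := by
  rw [lintegral_lintegral_swap (hN.mul (hG.comp measurable_snd)).aemeasurable,
    ← lintegral_const_mul A hG]
  refine lintegral_mono fun y => ?_
  rw [lintegral_mul_const _ hN.of_uncurry_right]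
  gcongr
  exact hcol y

theorem eLpNorm_lintegral_mul_le {N : α → β → ℝ≥0∞} (hN : Measurable (Function.uncurry N))
    {A : ℝ≥0∞} (hrow : ∀ x, ∫⁻ y, N x y ∂ν ≤ A) (hcol : ∀ y, ∫⁻ x, N x y ∂μ ≤ A)
    {G : β → ℝ≥0∞} (hG : Measurable G) {p : ℝ≥0∞} (hp : 1 ≤ p) :
    eLpNorm (fun x => ∫⁻ y, N x y * G y ∂ν) p μ ≤ A * eLpNorm G p ν := by
  rcases eq_or_ne p ∞ with rfl | hp_top
  · simp only [eLpNorm_exponent_top]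
    refine eLpNormEssSup_le_of_ae_enorm_bound (Filter.Eventually.of_forall fun x => ?_)
    calc ∫⁻ y, N x y * G y ∂ν ≤ ∫⁻ y, N x y * eLpNormEssSup G ν ∂ν :=
          lintegral_mono_ae (ae_le_eLpNormEssSup.mono fun y hy => by gcongr; exact hy)
      _ = (∫⁻ y, N x y ∂ν) * eLpNormEssSup G ν := lintegral_mul_const _ hN.of_uncurry_left
      _ ≤ A * eLpNormEssSup G ν := by gcongr; exact hrow x
  have hp0 : p ≠ 0 := (zero_lt_one.trans_le hp).ne'
  set q := p.toReal
  have hq : 1 ≤ q := by simpa using ENNReal.toReal_mono hp_top hp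
  have hq0 : 0 < q := zero_lt_one.trans_le hq
  have hGq : Measurable fun y => G y ^ q := hG.pow_const q
  have hpointwise : ∀ x, (∫⁻ y, N x y * G y ∂ν) ^ q
      ≤ A ^ (q - 1) * ∫⁻ y, N x y * G y ^ q ∂ν := fun x =>
    calc (∫⁻ y, N x y * G y ∂ν) ^ q
        ≤ ((∫⁻ y, N x y ∂ν) ^ (1 - 1 / q) * (∫⁻ y, N x y * G y ^ q ∂ν) ^ (1 / q)) ^ q :=
          ENNReal.rpow_le_rpow (lintegral_mul_le_rpow_mul_rpow hN.of_uncurry_left.aemeasurable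
            hG.aemeasurable hq) hq0.le
      _ = (∫⁻ y, N x y ∂ν) ^ (q - 1) * ∫⁻ y, N x y * G y ^ q ∂ν := by
          rw [ENNReal.mul_rpow_of_nonneg _ _ hq0.le, ← ENNReal.rpow_mul, ← ENNReal.rpow_mul,
            one_div_mul_cancel hq0.ne', ENNReal.rpow_one, sub_mul, one_mul,
            one_div_mul_cancel hq0.ne']
      _ ≤ A ^ (q - 1) * ∫⁻ y, N x y * G y ^ q ∂ν := by
          gcongr ?_ * _
          exact ENNReal.rpow_le_rpow (hrow x) (by linarith)
  have hintegral : ∫⁻ x, (∫⁻ y, N x y * G y ∂ν) ^ q ∂μ ≤ A ^ q * ∫⁻ y, G y ^ q ∂ν :=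
    calc ∫⁻ x, (∫⁻ y, N x y * G y ∂ν) ^ q ∂μ
        ≤ ∫⁻ x, A ^ (q - 1) * ∫⁻ y, N x y * G y ^ q ∂ν ∂μ := lintegral_mono hpointwise
      _ = A ^ (q - 1) * ∫⁻ x, ∫⁻ y, N x y * G y ^ q ∂ν ∂μ :=
          lintegral_const_mul _ (hN.mul (hGq.comp measurable_snd)).lintegral_prod_right'
      _ ≤ A ^ (q - 1) * (A ^ (1 : ℝ) * ∫⁻ y, G y ^ q ∂ν) := by
          rw [ENNReal.rpow_one]; gcongr; exact lintegral_lintegral_mul_le hN hcol hGq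
      _ = A ^ q * ∫⁻ y, G y ^ q ∂ν := by
          rw [← mul_assoc, ← ENNReal.rpow_add_of_nonneg _ _ (by linarith) zero_le_one,
            sub_add_cancel]
  simp only [eLpNorm_eq_lintegral_rpow_enorm_toReal hp0 hp_top, enorm_eq_self]
  calc (∫⁻ x, (∫⁻ y, N x y * G y ∂ν) ^ q ∂μ) ^ (1 / q)
      ≤ (A ^ q * ∫⁻ y, G y ^ q ∂ν) ^ (1 / q) := ENNReal.rpow_le_rpow hintegral (by positivity)
    _ = A * (∫⁻ y, G y ^ q ∂ν) ^ (1 / q) := by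
        rw [ENNReal.mul_rpow_of_nonneg _ _ (by positivity), ← ENNReal.rpow_mul,
          mul_one_div_cancel hq0.ne', ENNReal.rpow_one]

theorem schur_test {𝕜 : Type*} [RCLike 𝕜] {K : α → β → 𝕜} (hK : Measurable (Function.uncurry K))
    {A : ℝ≥0∞} (hA : A ≠ ∞) (hrow : ∀ x, ∫⁻ y, ‖K x y‖ₑ ∂ν ≤ A)
    (hcol : ∀ y, ∫⁻ x, ‖K x y‖ₑ ∂μ ≤ A) {p : ℝ≥0∞} (hp : 1 ≤ p) {f : β → 𝕜}
    (hf : MemLp f p ν) :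
    (∀ᵐ x ∂μ, Integrable (fun y => K x y * f y) ν) ∧
      eLpNorm (fun x => ∫ y, K x y * f y ∂ν) p μ ≤ A * eLpNorm f p ν := by
  obtain ⟨g, hg, hfg⟩ := hf.aestronglyMeasurable
  set φ : α → ℝ≥0∞ := fun x => ∫⁻ y, ‖K x y‖ₑ * ‖g y‖ₑ ∂ν
  have hφ : ∀ x, ∫⁻ y, ‖K x y * f y‖ₑ ∂ν = φ x := fun x =>
    lintegral_congr_ae (hfg.mono fun y hy => by simp only [enorm_mul, hy])
  have hφ_le : eLpNorm φ p μ ≤ A * eLpNorm f p ν := by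
    rw [eLpNorm_congr_ae hfg, ← eLpNorm_enorm g]
    exact eLpNorm_lintegral_mul_le hK.enorm hrow hcol hg.measurable.enorm hp
  have hφ_fin : ∀ᵐ x ∂μ, φ x < ∞ :=
    ae_lt_top_of_eLpNorm_ne_top
      (hK.enorm.mul (hg.measurable.enorm.comp measurable_snd)).lintegral_prod_right'.aemeasurable
      (zero_lt_one.trans_le hp).ne' (hφ_le.trans_lt (ENNReal.mul_lt_top hA.lt_top hf.2)).ne
  refine ⟨hφ_fin.mono fun x hx => ⟨?_, ?_⟩, ?_⟩
  · exact hK.of_uncurry_left.aestronglyMeasurable.mul hf.aestronglyMeasurable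
  · exact (hφ x).trans_lt hx
  · refine (eLpNorm_mono_enorm fun x => ?_).trans hφ_le
    rw [enorm_eq_self, ← hφ]
    exact enorm_integral_le_lintegral_enorm _

end SchurTest

lemma jap_pos (x : E3) : 0 < jap x := Real.sqrt_pos.mpr (by positivity)

lemma japR_pos (t : ℝ) : 0 < japR t := Real.sqrt_pos.mpr (by positivity)

lemma one_le_jap (x : E3) : 1 ≤ jap x :=
  Real.one_le_sqrt.mpr (le_add_of_nonneg_right (sq_nonneg _))

lemma one_le_japR (t : ℝ) : 1 ≤ japR t :=
  Real.one_le_sqrt.mpr (le_add_of_nonneg_right (sq_nonneg _))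

lemma norm_le_jap (x : E3) : ‖x‖ ≤ jap x := Real.le_sqrt_of_sq_le (by simp)

lemma abs_le_japR (t : ℝ) : |t| ≤ japR t := Real.abs_le_sqrt (by simp)

lemma jap_mul_self (x : E3) : jap x * jap x = 1 + ‖x‖ ^ 2 := Real.mul_self_sqrt (by positivity)

lemma japR_sub_comm (a b : ℝ) : japR (a - b) = japR (b - a) := by
  rw [japR, japR, ← neg_sub, neg_sq]

lemma jap_le_three_mul (x y : E3) : jap y ≤ 3 * (jap x * japR (‖x‖ - ‖y‖)) := by
  have hy : jap y ≤ 1 + ‖y‖ := sqrt_one_add_norm_sq_le y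
  have hxy : ‖y‖ ≤ ‖x‖ + |‖x‖ - ‖y‖| := by linarith [neg_abs_le (‖x‖ - ‖y‖)]
  nlinarith [one_le_jap x, one_le_japR (‖x‖ - ‖y‖), norm_le_jap x, abs_le_japR (‖x‖ - ‖y‖)]

lemma one_add_sq_rpow_neg (t s : ℝ) : (1 + t ^ 2) ^ (-s / 2) = (japR t ^ s)⁻¹ := by
  rw [japR, Real.sqrt_eq_rpow, ← Real.rpow_mul (by positivity), ← Real.rpow_neg (by positivity)]
  ring_nf

lemma div_jap_mul_jap_mul_japR_rpow_le {ε C : ℝ} (hC : 0 ≤ C) (x y : E3) :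
    C / (jap x * jap y * japR (‖x‖ - ‖y‖) ^ (2 + ε))
      ≤ 3 * C * ((1 + ‖y‖ ^ 2)⁻¹ * (1 + (‖x‖ - ‖y‖) ^ 2) ^ (-(1 + ε) / 2)) := by
  set t := ‖x‖ - ‖y‖
  have hpow : japR t ^ (2 + ε) = japR t * japR t ^ (1 + ε) := by
    rw [show (2 : ℝ) + ε = 1 + (1 + ε) by ring, Real.rpow_add (japR_pos t), Real.rpow_one]
  have hden : (1 + ‖y‖ ^ 2) * japR t ^ (1 + ε) ≤ 3 * (jap x * jap y * japR t ^ (2 + ε)) := by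
    rw [← jap_mul_self, hpow]
    have := mul_le_mul_of_nonneg_right (jap_le_three_mul x y)
      (mul_nonneg (jap_pos y).le (Real.rpow_nonneg (japR_pos t).le (1 + ε)))
    linarith
  rw [one_add_sq_rpow_neg, ← mul_inv, ← div_eq_mul_inv, ← mul_div_mul_left C _ three_ne_zero]
  exact div_le_div_of_nonneg_left (by positivity)
    (mul_pos (by positivity) (Real.rpow_pos_of_pos (japR_pos t) _)) hden

lemma lintegral_radial_weight_le (ε a : ℝ) :
    ∫⁻ z : E3, ENNReal.ofReal ((1 + ‖z‖ ^ 2)⁻¹ * (1 + (a - ‖z‖) ^ 2) ^ (-(1 + ε) / 2))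
      ≤ 3 * volume (Metric.ball (0 : E3) 1) *
        ∫⁻ t : ℝ, ENNReal.ofReal ((1 + t ^ 2) ^ (-(1 + ε) / 2)) := by
  rw [lintegral_fun_norm_addHaar volume
    (f := fun r => ENNReal.ofReal ((1 + r ^ 2)⁻¹ * (1 + (a - r) ^ 2) ^ (-(1 + ε) / 2)))
    (by fun_prop), finrank_euclideanSpace_fin]
  refine mul_le_mul' (by norm_num) ?_
  calc ∫⁻ r in Ioi 0, ENNReal.ofReal (r ^ 2) *
          ENNReal.ofReal ((1 + r ^ 2)⁻¹ * (1 + (a - r) ^ 2) ^ (-(1 + ε) / 2))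
      ≤ ∫⁻ r in Ioi 0, ENNReal.ofReal ((1 + (a - r) ^ 2) ^ (-(1 + ε) / 2)) := by
        refine lintegral_mono fun r => ?_
        rw [← ENNReal.ofReal_mul (by positivity), ← mul_assoc]
        refine ENNReal.ofReal_le_ofReal (mul_le_of_le_one_left (by positivity) ?_)
        rw [← div_eq_mul_inv, div_le_one (by positivity)]
        linarith
    _ ≤ ∫⁻ r, ENNReal.ofReal ((1 + (a - r) ^ 2) ^ (-(1 + ε) / 2)) := setLIntegral_le_lintegral _ _
    _ = ∫⁻ t, ENNReal.ofReal ((1 + t ^ 2) ^ (-(1 + ε) / 2)) :=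
        lintegral_sub_left_eq_self (fun t => ENNReal.ofReal ((1 + t ^ 2) ^ (-(1 + ε) / 2))) a

lemma lintegral_one_add_sq_rpow_lt_top {ε : ℝ} (hε : 0 < ε) :
    ∫⁻ t : ℝ, ENNReal.ofReal ((1 + t ^ 2) ^ (-(1 + ε) / 2)) < ∞ := by
  simpa [Real.norm_eq_abs, sq_abs] using (integrable_rpow_neg_one_add_norm_sq (E := ℝ)
    (μ := volume) (r := 1 + ε) (by simpa using hε)).lintegral_lt_top

lemma lintegral_enorm_le_of_norm_le_div_jap {F : Type*} [SeminormedAddGroup F] {ε C : ℝ}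
    {x : E3} {k : E3 → F}
    (hk : ∀ y, ‖k y‖ ≤ C / (jap x * jap y * japR (‖x‖ - ‖y‖) ^ (2 + ε))) :
    ∫⁻ y, ‖k y‖ₑ ≤ ENNReal.ofReal (3 * C) * (3 * volume (Metric.ball (0 : E3) 1) *
        ∫⁻ t : ℝ, ENNReal.ofReal ((1 + t ^ 2) ^ (-(1 + ε) / 2))) := by
  have hC : 0 ≤ C := by
    have hD : 0 < jap x * jap x * japR (‖x‖ - ‖x‖) ^ (2 + ε) :=
      mul_pos (mul_pos (jap_pos x) (jap_pos x)) (Real.rpow_pos_of_pos (japR_pos _) _)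
    simpa using (le_div_iff₀ hD).mp ((norm_nonneg _).trans (hk x))
  calc ∫⁻ y, ‖k y‖ₑ
      ≤ ∫⁻ y, ENNReal.ofReal (3 * C) *
          ENNReal.ofReal ((1 + ‖y‖ ^ 2)⁻¹ * (1 + (‖x‖ - ‖y‖) ^ 2) ^ (-(1 + ε) / 2)) := by
        refine lintegral_mono fun y => ?_
        rw [← ENNReal.ofReal_mul (by positivity), ← ofReal_norm]
        exact ENNReal.ofReal_le_ofReal ((hk y).trans (div_jap_mul_jap_mul_japR_rpow_le hC x y))
    _ = ENNReal.ofReal (3 * C) * ∫⁻ y,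
          ENNReal.ofReal ((1 + ‖y‖ ^ 2)⁻¹ * (1 + (‖x‖ - ‖y‖) ^ 2) ^ (-(1 + ε) / 2)) :=
        lintegral_const_mul' _ _ ENNReal.ofReal_ne_top
    _ ≤ _ := by gcongr; exact lintegral_radial_weight_le ε ‖x‖

theorem stmt0 (ε : ℝ) (hε : 0 < ε) (K : E3 → E3 → ℂ)
    (hKmeas : Measurable (Function.uncurry K)) (C : ℝ)
    (hK : ∀ x y : E3, ‖K x y‖ ≤ C / (jap x * jap y * japR (‖x‖ - ‖y‖) ^ (2 + ε))) :
    ∀ p : ℝ≥0∞, 1 ≤ p →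
      ∃ C' : ℝ, 0 ≤ C' ∧ ∀ f : E3 → ℂ, MemLp f p volume →
        (∀ᵐ x : E3, Integrable (fun y => K x y * f y)) ∧
        eLpNorm (fun x => ∫ y : E3, K x y * f y) p volume
          ≤ ENNReal.ofReal C' * eLpNorm f p volume := by
  intro p hp
  set A := ENNReal.ofReal (3 * C) * (3 * volume (Metric.ball (0 : E3) 1) *
    ∫⁻ t : ℝ, ENNReal.ofReal ((1 + t ^ 2) ^ (-(1 + ε) / 2)))
  have hA : A ≠ ∞ := ENNReal.mul_ne_top ENNReal.ofReal_ne_top <| ENNReal.mul_ne_top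
    (ENNReal.mul_ne_top (by norm_num) measure_ball_lt_top.ne)
    (lintegral_one_add_sq_rpow_lt_top hε).ne
  refine ⟨A.toReal, ENNReal.toReal_nonneg, fun f hf => ?_⟩
  rw [ENNReal.ofReal_toReal hA]
  refine schur_test hKmeas hA (fun x => lintegral_enorm_le_of_norm_le_div_jap (hK x))
    (fun y => lintegral_enorm_le_of_norm_le_div_jap (x := y) fun x => ?_) hp hf
  rw [mul_comm (jap y), japR_sub_comm]
  exact hK x y

end
end

section
/- There is a universal constant C such that for all real numbers a, b, λ with 0 < a ≤ 1, b ≥ 1, b − a > 1, and 0 < λ ≤ 1, one has | e^{(ia + ib)λ} / (ia + ib)³ − e^{(−a + ib)λ} / (−a + ib)³ | ≤ C a (λ / b³ + 1 / b⁴), and likewise | e^{(ia − ib)λ} / (ia − ib)³ − e^{(−a − ib)λ} / (−a − ib)³ | ≤ C a (λ / b³ + 1 / b⁴). -/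
/-!
Both differences are increments `f z - f w` of `f u = exp (l u) / u ^ 3` between two points of
the closed left half-plane that differ by `a + i a`.  On a convex region there with `m ≤ |u|`,
`|exp (l u)| ≤ 1` bounds `|f'| = |l exp (l u) / u ^ 3 - 3 exp (l u) / u ^ 4|` by
`l / m ^ 3 + 3 / m ^ 4`, and the mean value inequality gives the estimate with `m = b / 2`
(as `2 a < b`, both pairs lie in `im u ≥ b / 2` or in `im u ≤ -b / 2`).
-/

open Real Complex

noncomputable def expDivCube (l : ℝ) (u : ℂ) : ℂ := cexp (u * l) / u ^ 3

noncomputable def derivExpDivCube (l : ℝ) (u : ℂ) : ℂ :=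
  l * cexp (u * l) / u ^ 3 - 3 * cexp (u * l) / u ^ 4

theorem hasDerivAt_expDivCube (l : ℝ) {u : ℂ} (hu : u ≠ 0) :
    HasDerivAt (expDivCube l) (derivExpDivCube l u) u := by
  have hexp : HasDerivAt (fun u : ℂ => cexp (u * l)) (cexp (u * l) * l) u := by
    simpa using ((hasDerivAt_id u).mul_const (l : ℂ)).cexp
  refine (hexp.div (hasDerivAt_pow 3 u) (pow_ne_zero 3 hu)).congr_deriv ?_
  rw [derivExpDivCube]
  field_simp
  ring

theorem norm_cexp_mul_le_one {u : ℂ} (hu : u.re ≤ 0) {l : ℝ} (hl : 0 ≤ l) :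
    ‖cexp (u * l)‖ ≤ 1 := by
  rw [norm_exp, Real.exp_le_one_iff, re_mul_ofReal]
  exact mul_nonpos_of_nonpos_of_nonneg hu hl

theorem norm_derivExpDivCube_le {m l : ℝ} (hm : 0 < m) (hl : 0 ≤ l) {u : ℂ} (hu : u.re ≤ 0)
    (hmu : m ≤ ‖u‖) : ‖derivExpDivCube l u‖ ≤ l / m ^ 3 + 3 / m ^ 4 := by
  have hexp := norm_cexp_mul_le_one hu hl
  have hexp0 := norm_nonneg (cexp (u * l))
  have hcube : ‖(l : ℂ) * cexp (u * l) / u ^ 3‖ ≤ l / m ^ 3 := by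
    rw [norm_div, norm_mul, norm_pow, norm_real, Real.norm_of_nonneg hl]
    exact div_le_div₀ hl (mul_le_of_le_one_right hl hexp) (by positivity)
      (pow_le_pow_left₀ hm.le hmu 3)
  have hquartic : ‖3 * cexp (u * l) / u ^ 4‖ ≤ 3 / m ^ 4 := by
    rw [norm_div, norm_mul, norm_pow, RCLike.norm_ofNat]
    exact div_le_div₀ (by norm_num) (by linarith) (by positivity)
      (pow_le_pow_left₀ hm.le hmu 4)
  exact (norm_sub_le _ _).trans (add_le_add hcube hquartic)

theorem Convex.norm_expDivCube_sub_le {s : Set ℂ} (hs : Convex ℝ s) {m l : ℝ} (hm : 0 < m)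
    (hl : 0 ≤ l) (hsm : ∀ u ∈ s, u.re ≤ 0 ∧ m ≤ ‖u‖) {z w : ℂ} (hz : z ∈ s) (hw : w ∈ s) :
    ‖expDivCube l z - expDivCube l w‖ ≤ (l / m ^ 3 + 3 / m ^ 4) * ‖z - w‖ := by
  refine hs.norm_image_sub_le_of_norm_hasDerivWithin_le (fun u hu => ?_)
    (fun u hu => norm_derivExpDivCube_le hm hl (hsm u hu).1 (hsm u hu).2) hw hz
  have hu0 : u ≠ 0 := by
    rintro rfl
    simpa using hm.trans_le (hsm 0 hu).2
  exact (hasDerivAt_expDivCube l hu0).hasDerivWithinAt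

theorem norm_expDivCube_sub_le {m l : ℝ} (hm : 0 < m) (hl : 0 ≤ l) {z w : ℂ} (hz : z.re ≤ 0)
    (hw : w.re ≤ 0) (him : (m ≤ z.im ∧ m ≤ w.im) ∨ (z.im ≤ -m ∧ w.im ≤ -m)) :
    ‖expDivCube l z - expDivCube l w‖ ≤ (l / m ^ 3 + 3 / m ^ 4) * ‖z - w‖ := by
  rcases him with ⟨hzm, hwm⟩ | ⟨hzm, hwm⟩
  · refine ((convex_halfSpace_re_le 0).inter (convex_halfSpace_im_ge m)).norm_expDivCube_sub_le
      hm hl (fun u hu => ⟨hu.1, ?_⟩) ⟨hz, hzm⟩ ⟨hw, hwm⟩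
    exact hu.2.trans ((le_abs_self _).trans (abs_im_le_norm u))
  · refine ((convex_halfSpace_re_le 0).inter (convex_halfSpace_im_le (-m))).norm_expDivCube_sub_le
      hm hl (fun u hu => ⟨hu.1, ?_⟩) ⟨hz, hzm⟩ ⟨hw, hwm⟩
    exact (le_neg.mp hu.2).trans ((neg_le_abs _).trans (abs_im_le_norm u))

theorem norm_ofReal_add_I_mul_le {a : ℝ} (ha : 0 ≤ a) : ‖(a : ℂ) + I * a‖ ≤ 2 * a := by
  calc ‖(a : ℂ) + I * a‖ ≤ ‖(a : ℂ)‖ + ‖I * a‖ := norm_add_le _ _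
    _ = 2 * a := by simp [abs_of_nonneg ha]; ring

theorem stmt12 :
    ∃ C : ℝ, ∀ a b l : ℝ, 0 < a → a ≤ 1 → 1 ≤ b → 1 < b - a → 0 < l → l ≤ 1 →
      ‖Complex.exp ((Complex.I * a + Complex.I * b) * l) / (Complex.I * a + Complex.I * b) ^ 3 -
          Complex.exp ((-(a : ℂ) + Complex.I * b) * l) / (-(a : ℂ) + Complex.I * b) ^ 3‖
        ≤ C * a * (l / b ^ 3 + 1 / b ^ 4) ∧
      ‖Complex.exp ((Complex.I * a - Complex.I * b) * l) / (Complex.I * a - Complex.I * b) ^ 3 -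
          Complex.exp ((-(a : ℂ) - Complex.I * b) * l) / (-(a : ℂ) - Complex.I * b) ^ 3‖
        ≤ C * a * (l / b ^ 3 + 1 / b ^ 4) := by
  refine ⟨96, fun a b l ha ha1 _ hba hl _ => ?_⟩
  have hb : 0 < b / 2 := by linarith
  have hincrement : ∀ z w : ℂ, z.re ≤ 0 → w.re ≤ 0 →
      (b / 2 ≤ z.im ∧ b / 2 ≤ w.im) ∨ (z.im ≤ -(b / 2) ∧ w.im ≤ -(b / 2)) →
      z - w = a + I * a → ‖expDivCube l z - expDivCube l w‖ ≤ 96 * a * (l / b ^ 3 + 1 / b ^ 4) := by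
    intro z w hz hw him hzw
    calc ‖expDivCube l z - expDivCube l w‖
        ≤ (l / (b / 2) ^ 3 + 3 / (b / 2) ^ 4) * (2 * a) := by
          refine (norm_expDivCube_sub_le hb hl.le hz hw him).trans <| mul_le_mul_of_nonneg_left ?_
            (by positivity)
          exact hzw ▸ norm_ofReal_add_I_mul_le ha.le
      _ = 16 * (a * (l / b ^ 3)) + 96 * (a * (1 / b ^ 4)) := by field_simp; ring
      _ ≤ 96 * a * (l / b ^ 3 + 1 / b ^ 4) := by
          have : 0 ≤ a * (l / b ^ 3) := by positivity
          linarith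
  refine ⟨hincrement _ _ ?_ ?_ (.inl ⟨?_, ?_⟩) (by ring),
    hincrement _ _ ?_ ?_ (.inr ⟨?_, ?_⟩) (by ring)⟩ <;> simp <;> linarith
end
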